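/- arXiv:2004.08655 — 3 statements merged into one kernel-verified Lean document; each statement's English description precedes it below -/
import Mathlib

section
/- Let ε, G, F be nonnegative real numbers and U, L, ν positive real numbers, and set Re := U·L/ν (so 1/Re = ν/(U·L)). If ε ≤ (1/2)·G² + F·U and F ≤ U²/L + (√ν/L)·√ε, then ε ≤ G² + (2 + 1/Re)·(U³/L). -/
/-- Algebraic core of Theorem 3.3 (upper bound on the mean dissipation rate). -/
theorem mean_dissipation_upper_bound
    (ε G F U L ν Re : ℝ)
    (hε : 0 ≤ ε) (hG : 0 ≤ G) (hF : 0 ≤ F)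
    (hU : 0 < U) (hL : 0 < L) (hν : 0 < ν)
    (hRe : Re = U * L / ν)
    (h1 : ε ≤ (1/2) * G^2 + F * U)
    (h2 : F ≤ U^2 / L + (Real.sqrt ν / L) * Real.sqrt ε) :
    ε ≤ G^2 + (2 + 1/Re) * (U^3 / L) := by
  have hs : Real.sqrt ε ^ 2 = ε := Real.sq_sqrt hε
  have hn : Real.sqrt ν ^ 2 = ν := Real.sq_sqrt hν.le
  have hs0 : 0 ≤ Real.sqrt ε := Real.sqrt_nonneg _
  have hn0 : 0 ≤ Real.sqrt ν := Real.sqrt_nonneg _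
  have hRe' : (1:ℝ)/Re = ν/(U*L) := by
    rw [hRe]; field_simp
  rw [hRe']
  have h2' : F * L ≤ U^2 + Real.sqrt ν * Real.sqrt ε := by
    have := mul_le_mul_of_nonneg_right h2 hL.le
    calc F * L ≤ (U^2/L + Real.sqrt ν / L * Real.sqrt ε) * L := this
      _ = U^2 + Real.sqrt ν * Real.sqrt ε := by field_simp
  have key : ε * (L^2 * U) ≤ (G^2 + (2 + ν/(U*L)) * (U^3/L)) * (L^2 * U) := by
    have hRHS : (G^2 + (2 + ν/(U*L)) * (U^3/L)) * (L^2 * U)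
        = G^2*L^2*U + 2*U^4*L + ν*U^3 := by
      field_simp; ring
    have hexp : (Real.sqrt ε * L - Real.sqrt ν * U)^2
        = ε*L^2 - 2*(Real.sqrt ε*Real.sqrt ν)*(L*U) + ν*U^2 := by
      linear_combination L^2 * hs + U^2 * hn
    have hsq : 0 ≤ (ε*L^2 - 2*(Real.sqrt ε*Real.sqrt ν)*(L*U) + ν*U^2) * U :=
      mul_nonneg (hexp ▸ sq_nonneg _) hU.le
    rw [hRHS]
    nlinarith [mul_le_mul_of_nonneg_right h1 (show (0:ℝ) ≤ L^2*U by positivity),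
      mul_le_mul_of_nonneg_right h2' (show (0:ℝ) ≤ L*U^2 by positivity),
      hsq]
  exact le_of_mul_le_mul_right key (by positivity)
end

section
/- Let ε, G, F be nonnegative real numbers and U, L, ν positive real numbers, and set Re := U·L/ν. If (1/2)·G² ≤ ε + F·U and F ≤ U²/L + (√ν/L)·√ε, then ε ≥ (1/3)·G² − (1/3)·(2 + 1/Re)·(U³/L). -/
/-!
Multiplying the force estimate by `U` and bounding the cross term by AM-GM,
`(√ν U / L) √ε ≤ (ε + ν U² / L²) / 2`, gives `F U ≤ U³ / L + (ε + ν U² / L²) / 2`.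
Inserted into the energy inequality this yields `G² / 2 ≤ (3 / 2) ε + U³ / L + ν U² / (2 L²)`,
and `ν U² / L² = (1 / Re) (U³ / L)`.
-/

lemma mul_le_of_le_sq_div_add_sqrt_mul_sqrt
    {ε F U L ν : ℝ} (hε : 0 ≤ ε) (hU : 0 ≤ U) (hν : 0 ≤ ν)
    (hF : F ≤ U ^ 2 / L + (Real.sqrt ν / L) * Real.sqrt ε) :
    F * U ≤ U ^ 3 / L + (ε + ν * U ^ 2 / L ^ 2) / 2 := by
  have amgm := two_mul_le_add_sq (Real.sqrt ν * U / L) (Real.sqrt ε)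
  rw [div_pow, mul_pow, Real.sq_sqrt hν, Real.sq_sqrt hε] at amgm
  calc F * U ≤ (U ^ 2 / L + (Real.sqrt ν / L) * Real.sqrt ε) * U :=
        mul_le_mul_of_nonneg_right hF hU
    _ = U ^ 3 / L + (Real.sqrt ν * U / L) * Real.sqrt ε := by ring
    _ ≤ U ^ 3 / L + (ε + ν * U ^ 2 / L ^ 2) / 2 := by linarith

theorem mean_dissipation_lower_bound_general
    (ε G F U L ν Re : ℝ)
    (hε : 0 ≤ ε)
    (hU : 0 < U) (hL : 0 < L) (hν : 0 < ν)
    (hRe : Re = U * L / ν)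
    (h1 : (1/2) * G^2 ≤ ε + F * U)
    (h2 : F ≤ U^2 / L + (Real.sqrt ν / L) * Real.sqrt ε) :
    ε ≥ (1/3) * G^2 - (1/3) * (2 + 1/Re) * (U^3 / L) := by
  have hFU := mul_le_of_le_sq_div_add_sqrt_mul_sqrt hε hU.le hν.le h2
  have hRe_term : 1 / Re * (U ^ 3 / L) = ν * U ^ 2 / L ^ 2 := by
    rw [hRe]
    field_simp
  linarith

/-- Algebraic core of the lower bound in Theorem 4.2. -/
theorem mean_dissipation_lower_bound
    (ε G F U L ν Re : ℝ)
    (hε : 0 ≤ ε) (hG : 0 ≤ G) (hF : 0 ≤ F)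
    (hU : 0 < U) (hL : 0 < L) (hν : 0 < ν)
    (hRe : Re = U * L / ν)
    (h1 : (1/2) * G^2 ≤ ε + F * U)
    (h2 : F ≤ U^2 / L + (Real.sqrt ν / L) * Real.sqrt ε) :
    ε ≥ (1/3) * G^2 - (1/3) * (2 + 1/Re) * (U^3 / L) :=
  mean_dissipation_lower_bound_general ε G F U L ν Re hε hU hL hν hRe h1 h2
end

section
/- Let ν, U, L be positive reals, G, F, E, E2 nonnegative reals, and set Re := U·L/ν and B := (2 + 1/Re)·U³/L. Suppose E2 ≤ 2·G⁴ + 2·F²·U², F ≤ U²/L + (U·ν)/(2·L²) + E/(2·U), and E ≤ G² + B. Then E2 − E² ≤ 2·G⁴ + (2 + 1/Re)·G²·(U³/L) + (3/2)·(2 + 1/Re)²·(U⁶/L²). -/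
/-!
Write `B = (2 + 1/Re) U³/L`, which equals `2U³/L + νU²/L²`. The force estimate then reads
`2UF ≤ E + B`, so the second-moment bound gives `E2 ≤ 2G⁴ + (E + B)²/2 ≤ 2G⁴ + E² + B²`.
Hence `Var ≤ 2G⁴ + B²`, which is dominated by `2G⁴ + G²B + (3/2)B²` since `B ≥ 0`.
-/

lemma two_add_one_div_reynolds_mul_eq {ν U L : ℝ} (hU : U ≠ 0) (hL : L ≠ 0) :
    (2 + 1 / (U * L / ν)) * U ^ 3 / L = 2 * U ^ 3 / L + ν * U ^ 2 / L ^ 2 := by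
  rw [one_div, inv_div]
  field_simp

lemma two_mul_force_bound_eq {ν U L E : ℝ} (hU : U ≠ 0) (hL : L ≠ 0) :
    2 * U * (U ^ 2 / L + U * ν / (2 * L ^ 2) + E / (2 * U))
      = E + (2 * U ^ 3 / L + ν * U ^ 2 / L ^ 2) := by
  field_simp
  ring

lemma sq_div_two_sub_sq_le_sq {a b c : ℝ} (ha : 0 ≤ a) (h : a ≤ b + c) :
    a ^ 2 / 2 - b ^ 2 ≤ c ^ 2 := by
  have hsq : a ^ 2 ≤ (b + c) ^ 2 := pow_le_pow_left₀ ha h 2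
  nlinarith [sq_nonneg (b - c)]

theorem variance_reynolds_bound_general
    (ν U L G F E E2 Re B : ℝ)
    (hν : 0 < ν) (hU : 0 < U) (hL : 0 < L)
    (hF : 0 ≤ F)
    (hRe : Re = U * L / ν)
    (hB : B = (2 + 1/Re) * U^3 / L)
    (h1 : E2 ≤ 2 * G^4 + 2 * F^2 * U^2)
    (h2 : F ≤ U^2 / L + (U * ν) / (2 * L^2) + E / (2 * U)) :
    E2 - E^2 ≤ 2 * G^4 + (2 + 1/Re) * G^2 * (U^3 / L) + (3/2) * (2 + 1/Re)^2 * (U^6 / L^2) := by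
  have hB_eq : B = 2 * U ^ 3 / L + ν * U ^ 2 / L ^ 2 := by
    rw [hB, hRe, two_add_one_div_reynolds_mul_eq hU.ne' hL.ne']
  have hB_nonneg : 0 ≤ B := by rw [hB_eq]; positivity
  have hforce : 2 * U * F ≤ E + B := by
    rw [hB_eq, ← two_mul_force_bound_eq hU.ne' hL.ne']
    exact mul_le_mul_of_nonneg_left h2 (by positivity)
  have hvar : E2 - E ^ 2 ≤ 2 * G ^ 4 + B ^ 2 := by
    have hsq : (2 * U * F) ^ 2 / 2 = 2 * F ^ 2 * U ^ 2 := by ring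
    linarith [sq_div_two_sub_sq_le_sq (by positivity) hforce]
  calc E2 - E ^ 2 ≤ 2 * G ^ 4 + B ^ 2 := hvar
    _ ≤ 2 * G ^ 4 + G ^ 2 * B + 3 / 2 * B ^ 2 := by
      linarith [mul_nonneg (sq_nonneg G) hB_nonneg, sq_nonneg B]
    _ = _ := by rw [hB]; ring

/-- Algebraic core of the second (Reynolds-number form) variance bound in Theorem 5.3. -/
theorem variance_reynolds_bound
    (ν U L G F E E2 Re B : ℝ)
    (hν : 0 < ν) (hU : 0 < U) (hL : 0 < L)
    (hG : 0 ≤ G) (hF : 0 ≤ F) (hE : 0 ≤ E) (hE2 : 0 ≤ E2)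
    (hRe : Re = U * L / ν)
    (hB : B = (2 + 1/Re) * U^3 / L)
    (h1 : E2 ≤ 2 * G^4 + 2 * F^2 * U^2)
    (h2 : F ≤ U^2 / L + (U * ν) / (2 * L^2) + E / (2 * U))
    (h3 : E ≤ G^2 + B) :
    E2 - E^2 ≤ 2 * G^4 + (2 + 1/Re) * G^2 * (U^3 / L) + (3/2) * (2 + 1/Re)^2 * (U^6 / L^2) :=
  variance_reynolds_bound_general ν U L G F E E2 Re B hν hU hL hF hRe hB h1 h2
end
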